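/- The conditional q-measure of a one-step transition equals the squared modulus of its amplitude: fix n ≥ 2, 0 ≤ k ≤ n−2, x ∈ V, and y ∈ succ x; let E_x = {ω ∈ Ω_n : ω k = x} and E_{x,y} = {ω ∈ Ω_n : ω k = x and ω (k+1) = y}. Then μ_n(E_{x,y}) = μ_n(E_x) · |a x y|². In particular, whenever μ_n(E_x) ≠ 0, the conditional q-measure μ_n(E_{x,y}) / μ_n(E_x) equals |a x y|². (This is the identity μ_n(y | x) = |a(x→y)|² used to characterize discrete geodesics for an amplitude process.) -/

import Mathlib

/-!
Summing the amplitude of an `(m+2)`-path over its last step multiplies the amplitude of its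
`(m+1)`-prefix by `∑_{y ∈ succ x} a x y = 1`. Hence the amplitude of an event that only depends
on the first `j + 1` entries of an `n`-path may be computed in `Ω_{j+1}`. For `E_x` this gives the
sum `S` of the amplitudes of the `(k+1)`-paths ending at `x`, and for `E_{x,y}` it gives `S ⬝ a x y`;
taking `|·|²` yields `μ_n(E_{x,y}) = μ_n(E_x) ⬝ |a x y|²`.
-/

variable {V : Type*} [Fintype V] [DecidableEq V]

/-- An `n`-path: `ω 0 = v₀` and each entry is a successor of the previous one. -/
def IsPath (v₀ : V) (succ : V → Finset V) (n : ℕ) (ω : Fin n → V) : Prop :=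
  (∀ i : Fin n, (i : ℕ) = 0 → ω i = v₀) ∧
    ∀ i j : Fin n, (j : ℕ) = (i : ℕ) + 1 → ω j ∈ succ (ω i)

instance (v₀ : V) (succ : V → Finset V) (n : ℕ) :
    DecidablePred (IsPath v₀ succ n) := fun ω => by
  unfold IsPath; infer_instance

/-- `Ω_n`, the finite set of `n`-paths. -/
def pathSet (v₀ : V) (succ : V → Finset V) (n : ℕ) : Finset (Fin n → V) :=
  Finset.univ.filter (IsPath v₀ succ n)

/-- The amplitude `a_n(ω) = ∏_{k=0}^{n-2} a (ω k) (ω (k+1))`. -/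
noncomputable def amp (a : V → V → ℂ) (n : ℕ) (ω : Fin n → V) : ℂ :=
  ∏ k : Fin (n - 1),
    a (ω ⟨k.1, by have := k.2; omega⟩) (ω ⟨k.1 + 1, by have := k.2; omega⟩)

/-- The decoherence functional `D_n(A,B) = (∑_{ω ∈ A} a_n(ω)) ⬝ conj (∑_{ω' ∈ B} a_n(ω'))`. -/
noncomputable def Dfun (a : V → V → ℂ) (n : ℕ) (A B : Finset (Fin n → V)) : ℂ :=
  (∑ ω ∈ A, amp a n ω) * (starRingEnd ℂ) (∑ ω ∈ B, amp a n ω)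

/-- The `q`-measure `μ_n(A) = |∑_{ω ∈ A} a_n(ω)|²`. -/
noncomputable def qMeas (a : V → V → ℂ) (n : ℕ) (A : Finset (Fin n → V)) : ℝ :=
  Complex.normSq (∑ ω ∈ A, amp a n ω)

/-- The one-step extension `A→ = {ω ∈ Ω_{n+1} : ω|_{Fin n} ∈ A}`. -/
def ext (v₀ : V) (succ : V → Finset V) {n : ℕ} (A : Finset (Fin n → V)) :
    Finset (Fin (n + 1) → V) :=
  (pathSet v₀ succ (n + 1)).filter (fun ω => (fun k : Fin n => ω k.castSucc) ∈ A)

section GrowthModel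

variable {v₀ : V} {succ : V → Finset V} {a : V → V → ℂ}

omit [Fintype V] [DecidableEq V] in
theorem isPath_succ_iff {m : ℕ} {ω : Fin (m + 1) → V} :
    IsPath v₀ succ (m + 1) ω ↔ ω 0 = v₀ ∧ ∀ i : Fin m, ω i.succ ∈ succ (ω i.castSucc) := by
  refine ⟨fun ⟨h0, hs⟩ => ⟨h0 0 rfl, fun i => hs _ _ rfl⟩, fun ⟨h0, hs⟩ => ⟨?_, ?_⟩⟩
  · intro i hi
    rwa [show i = 0 from Fin.ext hi]
  · intro i j hj
    have := hs ⟨i, by omega⟩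
    rwa [show Fin.succ ⟨i, _⟩ = j from Fin.ext hj.symm] at this

omit [Fintype V] [DecidableEq V] in
theorem isPath_snoc_iff {m : ℕ} {ρ : Fin (m + 1) → V} {w : V} :
    IsPath v₀ succ (m + 2) (Fin.snoc ρ w) ↔
      IsPath v₀ succ (m + 1) ρ ∧ w ∈ succ (ρ (Fin.last m)) := by
  rw [isPath_succ_iff, isPath_succ_iff, ← Fin.castSucc_zero, Fin.forall_fin_succ']
  simp only [Fin.succ_castSucc, Fin.succ_last, Fin.snoc_castSucc, Fin.snoc_last, and_assoc]

omit [Fintype V] [DecidableEq V] in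
theorem amp_succ (m : ℕ) (ω : Fin (m + 1) → V) :
    amp a (m + 1) ω = ∏ i : Fin m, a (ω i.castSucc) (ω i.succ) :=
  rfl

omit [Fintype V] [DecidableEq V] in
theorem amp_snoc (m : ℕ) (ρ : Fin (m + 1) → V) (w : V) :
    amp a (m + 2) (Fin.snoc ρ w) = amp a (m + 1) ρ * a (ρ (Fin.last m)) w := by
  rw [amp_succ, amp_succ, Fin.prod_univ_castSucc]
  simp only [Fin.succ_castSucc, Fin.succ_last, Fin.snoc_castSucc, Fin.snoc_last]

theorem sum_pathSet_snoc {M : Type*} [AddCommMonoid M] (m : ℕ) (f : (Fin (m + 2) → V) → M) :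
    ∑ ω ∈ pathSet v₀ succ (m + 2), f ω =
      ∑ ρ ∈ pathSet v₀ succ (m + 1), ∑ w ∈ succ (ρ (Fin.last m)), f (Fin.snoc ρ w) := by
  rw [Finset.sum_sigma']
  symm
  refine Finset.sum_nbij' (fun p => Fin.snoc p.1 p.2) (fun ω => ⟨Fin.init ω, ω (Fin.last _)⟩)
    ?_ ?_ ?_ ?_ fun _ _ => rfl
  · rintro ⟨ρ, w⟩ hp
    simpa [pathSet, isPath_snoc_iff] using hp
  · intro ω hω
    have hpath : IsPath v₀ succ (m + 2) (Fin.snoc (Fin.init ω) (ω (Fin.last _))) := by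
      simpa [pathSet] using hω
    simpa [pathSet] using isPath_snoc_iff.1 hpath
  · rintro ⟨ρ, w⟩ -
    simp
  · intro ω _
    exact Fin.snoc_init_self ω
theorem sum_amp_filter_init (ha : ∀ x, ∑ y ∈ succ x, a x y = 1) (m : ℕ)
    (P : (Fin (m + 1) → V) → Prop) [DecidablePred P] :
    ∑ ω ∈ pathSet v₀ succ (m + 2) with P (Fin.init ω), amp a (m + 2) ω =
      ∑ ρ ∈ pathSet v₀ succ (m + 1) with P ρ, amp a (m + 1) ρ := by
  rw [Finset.sum_filter, Finset.sum_filter, sum_pathSet_snoc]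
  refine Finset.sum_congr rfl fun ρ _ => ?_
  split_ifs with hρ <;> simp [hρ, amp_snoc, ← Finset.mul_sum, ha]

theorem sum_amp_filter_take (ha : ∀ x, ∑ y ∈ succ x, a x y = 1) {j n : ℕ} (hjn : j + 1 ≤ n)
    (P : (Fin (j + 1) → V) → Prop) [DecidablePred P] :
    ∑ ω ∈ pathSet v₀ succ n with P (Fin.take (j + 1) hjn ω), amp a n ω =
      ∑ ρ ∈ pathSet v₀ succ (j + 1) with P ρ, amp a (j + 1) ρ := by
  induction n, hjn using Nat.le_induction with
  | base => simp only [Fin.take_eq_self]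
  | succ n hjn ih =>
    obtain ⟨m, rfl⟩ : ∃ m, n = m + 1 := ⟨n - 1, by omega⟩
    rw [← ih]
    exact sum_amp_filter_init ha m fun ρ => P (Fin.take (j + 1) hjn ρ)

theorem sum_amp_filter_last_two (x y : V) (hy : y ∈ succ x) (k : ℕ) :
    ∑ ω ∈ pathSet v₀ succ (k + 2) with
        ω (Fin.last k).castSucc = x ∧ ω (Fin.last (k + 1)) = y, amp a (k + 2) ω =
      (∑ ρ ∈ pathSet v₀ succ (k + 1) with ρ (Fin.last k) = x, amp a (k + 1) ρ) * a x y := by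
  rw [Finset.sum_filter, Finset.sum_filter, sum_pathSet_snoc, Finset.sum_mul]
  refine Finset.sum_congr rfl fun ρ _ => ?_
  by_cases hρ : ρ (Fin.last k) = x
  · simp [hρ, amp_snoc, hy]
  · simp [hρ]

end GrowthModel

/-- The conditional `q`-measure of a one-step transition equals the squared
modulus of its amplitude: `μ_n(E_{x,y}) = μ_n(E_x) ⬝ |a x y|²`, and hence
`μ_n(y | x) = |a(x→y)|²` whenever `μ_n(E_x) ≠ 0`. -/
theorem stmt13 (v₀ : V) (succ : V → Finset V) (a : V → V → ℂ)
    (ha : ∀ x : V, ∑ y ∈ succ x, a x y = 1)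
    (n k : ℕ) (hn : 2 ≤ n) (hk : k ≤ n - 2) (x y : V) (hy : y ∈ succ x) :
    qMeas a n ((pathSet v₀ succ n).filter
        (fun ω => ω ⟨k, by omega⟩ = x ∧ ω ⟨k + 1, by omega⟩ = y)) =
      qMeas a n ((pathSet v₀ succ n).filter (fun ω => ω ⟨k, by omega⟩ = x)) *
        Complex.normSq (a x y) ∧
    (qMeas a n ((pathSet v₀ succ n).filter (fun ω => ω ⟨k, by omega⟩ = x)) ≠ 0 →
      qMeas a n ((pathSet v₀ succ n).filter
          (fun ω => ω ⟨k, by omega⟩ = x ∧ ω ⟨k + 1, by omega⟩ = y)) /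
        qMeas a n ((pathSet v₀ succ n).filter (fun ω => ω ⟨k, by omega⟩ = x)) =
          Complex.normSq (a x y)) := by
  have hx : ∑ ω ∈ pathSet v₀ succ n with ω ⟨k, by omega⟩ = x, amp a n ω =
      ∑ ρ ∈ pathSet v₀ succ (k + 1) with ρ (Fin.last k) = x, amp a (k + 1) ρ :=
    sum_amp_filter_take ha (by omega) fun ρ => ρ (Fin.last k) = x
  have hxy : ∑ ω ∈ pathSet v₀ succ n with
        ω ⟨k, by omega⟩ = x ∧ ω ⟨k + 1, by omega⟩ = y, amp a n ω =
      (∑ ρ ∈ pathSet v₀ succ (k + 1) with ρ (Fin.last k) = x, amp a (k + 1) ρ) * a x y := by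
    rw [← sum_amp_filter_last_two x y hy k]
    exact sum_amp_filter_take ha (by omega) fun ρ =>
      ρ (Fin.last k).castSucc = x ∧ ρ (Fin.last (k + 1)) = y
  have conditional_of_eq_mul {A B c : ℝ} (h : A = B * c) : A = B * c ∧ (B ≠ 0 → A / B = c) :=
    ⟨h, fun hB => by rw [h, mul_div_cancel_left₀ _ hB]⟩
  refine conditional_of_eq_mul ?_
  rw [qMeas, qMeas, hx, hxy, Complex.normSq_mul]
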